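/- arXiv:1310.7137 — 5 statements merged into one kernel-verified Lean document; each statement's English description precedes it below -/
import Mathlib

section
/- Let (A, Σ, δ) be a finite automaton that admits no cycle with exit. Then for every choice of production functions ρ = (ρ_x : Σ → Σ)_{x∈A}, the semigroup generated by the enriched Mealy automaton (A, Σ, δ, ρ) is finite. -/
/-- Extended production function of a Mealy automaton: `mealyMap δ ρ x` is the
action of the state `x` on finite words over the alphabet. -/
def mealyMap {A S : Type*} (δ : S → A → A) (ρ : A → S → S) : A → List S → List S
  | _, [] => []
  | x, i :: s => ρ x i :: mealyMap δ ρ (δ i x) s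

/-- The semigroup generated by a Mealy automaton: the subsemigroup of maps
`Σ* → Σ*` (under composition) generated by the production functions. -/
def mealySemigroup {A S : Type*} (δ : S → A → A) (ρ : A → S → S) :
    Subsemigroup (Function.End (List S)) :=
  Subsemigroup.closure (Set.range fun x => (mealyMap δ ρ x : Function.End (List S)))

/-- The group generated by an invertible Mealy automaton: the subgroup of
permutations of `Σ*` generated by the production functions. -/
def mealyGroup {A S : Type*} (δ : S → A → A) (ρ : A → S → S) :
    Subgroup (Equiv.Perm (List S)) :=
  Subgroup.closure {f : Equiv.Perm (List S) | ∃ x : A, ⇑f = mealyMap δ ρ x}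

/-- A cycle in the automaton `(A, Σ, δ)`: pairwise distinct states
`states 0, …, states (n-1)` with transitions `states k —labels k→ states (k+1 mod n)`. -/
structure MealyCycle {A S : Type*} (δ : S → A → A) where
  n : ℕ
  npos : 0 < n
  states : Fin n → A
  labels : Fin n → S
  inj : Function.Injective states
  step : ∀ k : Fin n, δ (labels k) (states k) = states ⟨(k + 1) % n, Nat.mod_lt _ npos⟩

/-- The cycle has an external exit. -/
def HasExternalExit {A S : Type*} {δ : S → A → A} (C : MealyCycle δ) : Prop :=
  ∃ (k : Fin C.n) (i : S), δ i (C.states k) ∉ Set.range C.states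

/-- The cycle has an internal exit. -/
def HasInternalExit {A S : Type*} {δ : S → A → A} (C : MealyCycle δ) : Prop :=
  ∃ (k : Fin C.n) (i : S), δ i (C.states k) ∈ Set.range C.states ∧
    δ i (C.states k) ≠ δ (C.labels k) (C.states k)

/-- `v` is reachable from `u` in the automaton `(A, Σ, δ)`. -/
def Reachable {A S : Type*} (δ : S → A → A) (u v : A) : Prop :=
  ∃ s : List S, s.foldl (fun a i => δ i a) u = v

/-- Action of a word `s ∈ Σ*` on states of powers of the automaton (words over `A`),
via the production functions of the dual automaton: `dualAct δ ρ s = δ_s`. -/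
def dualAct {A S : Type*} (δ : S → A → A) (ρ : A → S → S) (s : List S) (u : List A) : List A :=
  s.foldl (fun w i => mealyMap ρ δ i w) u

/-- Two states of a power of a reversible Mealy automaton lie in the same
connected component iff some `δ_s` maps one to the other. -/
def sameComp {A S : Type*} (δ : S → A → A) (ρ : A → S → S) (u w : List A) : Prop :=
  ∃ s : List S, dualAct δ ρ s u = w

/-!
Without cycles with exit, any run of length at least `|A|` ends on a cycle, and from a state of
a cycle every letter leads to the next state of that cycle. The state reached after `|A|` letters
therefore comes back after any further `|A|!` letters, so every element `f` of the semigroup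
satisfies `f (s ++ t ++ r) = f (s ++ t) ++ (f (s ++ r)).drop |A|` for `|s| = |A|`, `|t| = |A|!`.
Maps with this pumping property are determined by their values on words of length at most
`|A| + |A|!`, hence there are finitely many of them.
-/

section Run

variable {A S : Type*} (δ : S → A → A)

def mealyRun (x : A) (s : List S) : A := s.foldl (fun a i => δ i a) x

@[simp]
lemma mealyRun_nil (x : A) : mealyRun δ x [] = x := rfl

@[simp]
lemma mealyRun_cons (x : A) (i : S) (s : List S) :
    mealyRun δ x (i :: s) = mealyRun δ (δ i x) s := rfl

lemma mealyRun_append (x : A) (s t : List S) :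
    mealyRun δ x (s ++ t) = mealyRun δ (mealyRun δ x s) t :=
  List.foldl_append ..

lemma mealyRun_take_add_one (x : A) {s : List S} {k : ℕ} (hk : k < s.length) :
    mealyRun δ x (s.take (k + 1)) = δ s[k] (mealyRun δ x (s.take k)) := by
  rw [List.take_add_one, List.getElem?_eq_getElem hk, mealyRun_append]
  rfl

variable (ρ : A → S → S)

@[simp]
lemma mealyMap_length : ∀ (x : A) (s : List S), (mealyMap δ ρ x s).length = s.length
  | _, [] => rfl
  | x, i :: s => by simp [mealyMap, mealyMap_length _ s]

lemma mealyMap_append : ∀ (x : A) (s t : List S),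
    mealyMap δ ρ x (s ++ t) = mealyMap δ ρ x s ++ mealyMap δ ρ (mealyRun δ x s) t
  | _, [], _ => rfl
  | x, i :: s, t => by simp [mealyMap, mealyMap_append _ s t]

end Run

section Pumping

variable {S : Type*} {m p : ℕ}

/-- Beyond position `m + p`, `f` outputs what it outputs on the word with the block `t` of
length `p` cut out. -/
structure IsPumping (m p : ℕ) (f : List S → List S) : Prop where
  length_eq : ∀ s, (f s).length = s.length
  prefix_map : ∀ s r, f s <+: f (s ++ r)
  pump : ∀ s t r, s.length = m → t.length = p →
    f (s ++ t ++ r) = f (s ++ t) ++ (f (s ++ r)).drop m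

lemma IsPumping.take_append {f : List S → List S} (hf : IsPumping m p f) (s r : List S) :
    (f (s ++ r)).take s.length = f s := by
  obtain ⟨u, hu⟩ := hf.prefix_map s r
  rw [← hu, List.take_left' (hf.length_eq s)]

lemma IsPumping.comp {f g : List S → List S} (hf : IsPumping m p f) (hg : IsPumping m p g) :
    IsPumping m p (f ∘ g) where
  length_eq s := by simp [hf.length_eq, hg.length_eq]
  prefix_map s r := by
    obtain ⟨u, hu⟩ := hg.prefix_map s r
    simpa [← hu] using hf.prefix_map (g s) u
  pump s t r hs ht := by
    have hlen : (g (s ++ t)).length = m + p := by simp [hg.length_eq, hs, ht]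
    have hsplit : g (s ++ r) = (g (s ++ t)).take m ++ (g (s ++ r)).drop m := by
      rw [← hs, hg.take_append, ← hg.take_append s r, List.take_append_drop]
    have := hf.pump ((g (s ++ t)).take m) ((g (s ++ t)).drop m) ((g (s ++ r)).drop m)
      (by simp [hlen]) (by simp [hlen])
    rw [List.take_append_drop, ← hsplit] at this
    rwa [Function.comp_apply, hg.pump s t r hs ht]

lemma IsPumping.eq_of_forall_length_le {f g : List S → List S} (hp : 0 < p)
    (hf : IsPumping m p f) (hg : IsPumping m p g)
    (h : ∀ w : List S, w.length ≤ m + p → f w = g w) : f = g := by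
  funext w
  induction hw : w.length using Nat.strong_induction_on generalizing w with
  | _ n ih =>
    by_cases hshort : n ≤ m + p
    · exact h w (hw ▸ hshort)
    obtain ⟨s, t, r, rfl, hs, ht⟩ :
        ∃ s t r, w = s ++ t ++ r ∧ s.length = m ∧ t.length = p :=
      ⟨w.take m, (w.drop m).take p, (w.drop m).drop p, by simp, by simp; omega, by simp; omega⟩
    rw [hf.pump s t r hs ht, hg.pump s t r hs ht, h (s ++ t) (by simp; omega),
      ih (s ++ r).length (by simp at hw ⊢; omega) _ rfl]

def pumpingSubsemigroup (S : Type*) (m p : ℕ) : Subsemigroup (Function.End (List S)) where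
  carrier := {f | IsPumping m p f}
  mul_mem' hf hg := hf.comp hg

lemma finite_pumpingSubsemigroup [Finite S] (hp : 0 < p) :
    Finite (pumpingSubsemigroup S m p) := by
  let Short := {w : List S // w.length ≤ m + p}
  have : Finite Short := (List.finite_length_le S (m + p)).to_subtype
  refine Finite.of_injective (β := Short → Short)
    (fun f w => ⟨f.1 w.1, (f.2.length_eq w.1).trans_le w.2⟩) fun f g hfg => ?_
  refine Subtype.ext (IsPumping.eq_of_forall_length_le hp f.2 g.2 fun w hw => ?_)
  exact congrArg Subtype.val (congrFun hfg ⟨w, hw⟩)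

end Pumping

namespace MealyCycle

variable {A S : Type*} {δ : S → A → A} {C : MealyCycle δ}

lemma n_le_card [Fintype A] (C : MealyCycle δ) : C.n ≤ Fintype.card A := by
  simpa using Fintype.card_le_of_injective C.states C.inj

section NoExit

variable (hC : ¬ (HasExternalExit C ∨ HasInternalExit C))
include hC

lemma transition_eq (k : Fin C.n) (i : S) :
    δ i (C.states k) = C.states ⟨(k + 1) % C.n, Nat.mod_lt _ C.npos⟩ := by
  rw [← C.step k]
  by_contra hne
  by_cases hmem : δ i (C.states k) ∈ Set.range C.states
  · exact hC (Or.inr ⟨k, i, hmem, hne⟩)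
  · exact hC (Or.inl ⟨k, i, hmem⟩)

lemma mealyRun_states (k : Fin C.n) (t : List S) :
    mealyRun δ (C.states k) t = C.states ⟨(k + t.length) % C.n, Nat.mod_lt _ C.npos⟩ := by
  induction t generalizing k with
  | nil => simp [Nat.mod_eq_of_lt k.isLt]
  | cons i t ih =>
    rw [mealyRun_cons, transition_eq hC, ih]
    congr 2
    simp only [Nat.mod_add_mod, List.length_cons]
    ring_nf

lemma mealyRun_states_of_length_eq_factorial [Fintype A] (k : Fin C.n) (t : List S)
    (ht : t.length = (Fintype.card A).factorial) :
    mealyRun δ (C.states k) t = C.states k := by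
  have hdvd : C.n ∣ (Fintype.card A).factorial := Nat.dvd_factorial C.npos C.n_le_card
  rw [mealyRun_states hC, ht]
  congr 1
  ext
  simp [Nat.add_mod, Nat.mod_eq_zero_of_dvd hdvd, Nat.mod_eq_of_lt k.isLt]

end NoExit

end MealyCycle

lemma exists_lt_map_eq_injOn_Iio {α : Type*} [Fintype α] (f : ℕ → α) :
    ∃ c d, c < d ∧ d ≤ Fintype.card α ∧ f d = f c ∧ Set.InjOn f (Set.Iio d) := by
  classical
  have hrep : ∃ d, d ≤ Fintype.card α ∧ ∃ c < d, f d = f c := by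
    obtain ⟨a, ha, b, hb, hab, hfab⟩ := Finset.exists_ne_map_eq_of_card_lt_of_maps_to
      (s := Finset.range (Fintype.card α + 1)) (t := Finset.univ) (by simp)
      (fun a _ => Finset.mem_coe.2 (Finset.mem_univ (f a)))
    simp only [Finset.mem_range] at ha hb
    rcases hab.lt_or_gt with h | h
    · exact ⟨b, by omega, a, h, hfab.symm⟩
    · exact ⟨a, by omega, b, h, hfab⟩
  obtain ⟨hd, c, hcd, hfd⟩ := Nat.find_spec hrep
  refine ⟨c, Nat.find hrep, hcd, hd, hfd, fun a ha b hb hab => ?_⟩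
  by_contra hne
  rcases Ne.lt_or_gt hne with h | h
  · exact Nat.find_min hrep hb ⟨(Set.mem_Iio.1 hb).le.trans hd, a, h, hab.symm⟩
  · exact Nat.find_min hrep ha ⟨(Set.mem_Iio.1 ha).le.trans hd, b, h, hab⟩

lemma exists_mealyCycle_of_walk {A S : Type*} {δ : S → A → A} {P : ℕ → A} {c d : ℕ}
    (hcd : c < d) (hstep : ∀ k, c ≤ k → k < d → ∃ i, δ i (P k) = P (k + 1))
    (hinj : Set.InjOn P (Set.Ico c d)) (hret : P d = P c) :
    ∃ C : MealyCycle δ, P c ∈ Set.range C.states := by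
  have : Nonempty S := ⟨(hstep c le_rfl hcd).choose⟩
  choose! l hl using hstep
  refine ⟨⟨d - c, Nat.sub_pos_of_lt hcd, fun k => P (c + k), fun k => l (c + k), ?_, ?_⟩,
    ⟨⟨0, Nat.sub_pos_of_lt hcd⟩, rfl⟩⟩
  · intro a b hab
    have hmem : ∀ k : Fin (d - c), c + k ∈ Set.Ico c d := fun k => ⟨by omega, by omega⟩
    exact Fin.ext (by simpa using hinj (hmem a) (hmem b) hab)
  · intro k
    rw [hl _ (by omega) (by omega)]
    rcases Nat.lt_or_ge (k + 1) (d - c) with hk | hk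
    · simp only [Nat.mod_eq_of_lt hk]
      rfl
    · simp only [show (k : ℕ) + 1 = d - c by omega, Nat.mod_self, add_zero]
      rw [show c + k + 1 = d by omega, hret]

section NoCycleWithExit

variable {A S : Type*} [Fintype A] {δ : S → A → A}
  (h : ∀ C : MealyCycle δ, ¬ (HasExternalExit C ∨ HasInternalExit C))
include h

lemma exists_mealyRun_eq_states (x : A) (s : List S) (hs : Fintype.card A ≤ s.length) :
    ∃ (C : MealyCycle δ) (k : Fin C.n), mealyRun δ x s = C.states k := by
  let P : ℕ → A := fun k => mealyRun δ x (s.take k)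
  obtain ⟨c, d, hcd, hd, hret, hinj⟩ := exists_lt_map_eq_injOn_Iio P
  have hstep : ∀ k, c ≤ k → k < d → ∃ i, δ i (P k) = P (k + 1) := fun k _ hk =>
    ⟨_, (mealyRun_take_add_one δ x (show k < s.length by omega)).symm⟩
  obtain ⟨C, k, hk⟩ := exists_mealyCycle_of_walk hcd hstep
    (hinj.mono fun _ hm => hm.2) hret
  refine ⟨C, _, Eq.trans ?_ (C.mealyRun_states (h C) k (s.drop c))⟩
  rw [hk, ← mealyRun_append, List.take_append_drop]

lemma mealyRun_mealyRun_of_length_eq_factorial (x : A) {s t : List S}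
    (hs : Fintype.card A ≤ s.length) (ht : t.length = (Fintype.card A).factorial) :
    mealyRun δ (mealyRun δ x s) t = mealyRun δ x s := by
  obtain ⟨C, k, hk⟩ := exists_mealyRun_eq_states h x s hs
  rw [hk, C.mealyRun_states_of_length_eq_factorial (h C) k t ht]


lemma isPumping_mealyMap (ρ : A → S → S) (x : A) :
    IsPumping (Fintype.card A) (Fintype.card A).factorial (mealyMap δ ρ x) where
  length_eq := mealyMap_length δ ρ x
  prefix_map s r := by simp [mealyMap_append]
  pump s t r hs ht := by
    rw [mealyMap_append _ _ x (s ++ t) r, mealyRun_append,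
      mealyRun_mealyRun_of_length_eq_factorial h x hs.ge ht, mealyMap_append _ _ x s r,
      List.drop_left' (by simp [hs])]

end NoCycleWithExit


theorem no_cycle_with_exit_finite_semigroup_general
    {A S : Type*} [Fintype A] [Fintype S]
    (δ : S → A → A)
    (h : ∀ C : MealyCycle δ, ¬ (HasExternalExit C ∨ HasInternalExit C))
    (ρ : A → S → S) :
    Finite ↥(mealySemigroup δ ρ) := by
  have hle :
      mealySemigroup δ ρ ≤ pumpingSubsemigroup S (Fintype.card A) (Fintype.card A).factorial :=
    Subsemigroup.closure_le.2 (by rintro _ ⟨x, rfl⟩; exact isPumping_mealyMap h ρ x)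
  have := finite_pumpingSubsemigroup (S := S) (m := Fintype.card A)
    (Nat.factorial_pos (Fintype.card A))
  exact Finite.Set.subset _ hle

/-- Antonenko–Russyev: if a finite automaton admits no cycle with exit,
then whatever production functions it is enriched with, the generated semigroup is finite. -/
theorem no_cycle_with_exit_finite_semigroup
    {A S : Type*} [Fintype A] [Fintype S] [Nonempty A] [Nonempty S]
    (δ : S → A → A)
    (h : ∀ C : MealyCycle δ, ¬ (HasExternalExit C ∨ HasInternalExit C))
    (ρ : A → S → S) :
    Finite ↥(mealySemigroup δ ρ) :=
  no_cycle_with_exit_finite_semigroup_general δ h ρ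
end

section
/- (River of no return Lemma) Let (A, Σ, δ) be a finite automaton with alphabet of at least two elements, and let C be a cycle in it. If C admits an external exit to some state y (i.e., some transition x —i→ y with x on C and y not on C) such that no state of C is reachable from y, then there exists a family ρ = (ρ_x)_{x∈A} of permutations of Σ such that the group generated by the invertible Mealy automaton (A, Σ, δ, ρ) is infinite. -/
/-- `F` acts on the blocks `L` (digit one) and `B` (digit zero) as the binary odometer. -/
def IsOdometer {α : Type*} (F : Equiv.Perm (List α)) (L B : List α) : Prop :=
  ∀ w, F (L ++ w) = B ++ F w ∧ F (B ++ w) = L ++ w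

namespace IsOdometer

variable {α : Type*} {F : Equiv.Perm (List α)} {L B : List α}

lemma pow_two_mul_apply_append (h : IsOdometer F L B) (j : ℕ) (w : List α) :
    (F ^ (2 * j)) (L ++ w) = L ++ (F ^ j) w := by
  induction j with
  | zero => simp
  | succ j ih =>
    rw [show 2 * (j + 1) = 2 + 2 * j by ring, pow_add, Equiv.Perm.mul_apply, ih, sq,
      Equiv.Perm.mul_apply, (h _).1, (h _).2, pow_succ', Equiv.Perm.mul_apply]

lemma pow_two_mul_add_one_apply_append (h : IsOdometer F L B) (j : ℕ) (w : List α) :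
    (F ^ (2 * j + 1)) (L ++ w) = B ++ (F ^ (j + 1)) w := by
  rw [pow_succ', Equiv.Perm.mul_apply, h.pow_two_mul_apply_append, (h _).1, pow_succ',
    Equiv.Perm.mul_apply]

lemma two_pow_dvd_of_pow_apply_flatten_replicate (h : IsOdometer F L B)
    (hlen : L.length = B.length) (hne : L ≠ B) {e : ℕ} (m : ℕ)
    (he : (F ^ e) (List.replicate m L).flatten = (List.replicate m L).flatten) :
    2 ^ m ∣ e := by
  induction m generalizing e with
  | zero => exact one_dvd e
  | succ m ih =>
    rw [List.replicate_succ, List.flatten_cons] at he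
    obtain ⟨j, rfl | rfl⟩ := Nat.even_or_odd' e
    · rw [h.pow_two_mul_apply_append] at he
      rw [pow_succ']
      exact Nat.mul_dvd_mul_left 2 (ih (List.append_cancel_left he))
    · rw [h.pow_two_mul_add_one_apply_append] at he
      exact absurd (List.append_inj he hlen.symm).1.symm hne

lemma not_isOfFinOrder (h : IsOdometer F L B) (hlen : L.length = B.length) (hne : L ≠ B) :
    ¬ IsOfFinOrder F := by
  rw [isOfFinOrder_iff_pow_eq_one]
  rintro ⟨e, he, hFe⟩
  have hdvd := h.two_pow_dvd_of_pow_apply_flatten_replicate hlen hne e (by rw [hFe]; rfl)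
  exact (Nat.le_of_dvd he hdvd).not_gt e.lt_two_pow_self

end IsOdometer

section Mealy

variable {A S : Type*} (δ : S → A → A) {ρ : A → S → S}

lemma mealyMap_injective (hρ : ∀ x, (ρ x).Injective) (x : A) :
    (mealyMap δ ρ x).Injective := by
  intro s t hst
  induction s generalizing x t with
  | nil => cases t <;> simp_all [mealyMap]
  | cons a s ih =>
    cases t with
    | nil => simp [mealyMap] at hst
    | cons b t =>
      simp only [mealyMap, List.cons.injEq] at hst
      obtain rfl := hρ x hst.1
      rw [ih _ hst.2]

lemma mealyMap_surjective (hρ : ∀ x, (ρ x).Surjective) (x : A) :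
    (mealyMap δ ρ x).Surjective := by
  intro w
  induction w generalizing x with
  | nil => exact ⟨[], rfl⟩
  | cons j w ih =>
    obtain ⟨a, rfl⟩ := hρ x j
    obtain ⟨s, hs⟩ := ih (δ a x)
    exact ⟨a :: s, by rw [mealyMap, hs]⟩

noncomputable def mealyPerm (hρ : ∀ x, (ρ x).Bijective) (x : A) : Equiv.Perm (List S) :=
  Equiv.ofBijective _ ⟨mealyMap_injective δ (fun x => (hρ x).1) x,
    mealyMap_surjective δ (fun x => (hρ x).2) x⟩

@[simp]
lemma coe_mealyPerm (hρ : ∀ x, (ρ x).Bijective) (x : A) :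
    ⇑(mealyPerm δ hρ x) = mealyMap δ ρ x :=
  rfl

lemma infinite_mealyGroup_of_not_isOfFinOrder (hρ : ∀ x, (ρ x).Bijective) (x : A)
    (hx : ¬ IsOfFinOrder (mealyPerm δ hρ x)) : Infinite (mealyGroup δ ρ) := by
  have hmem : mealyPerm δ hρ x ∈ mealyGroup δ ρ := Subgroup.subset_closure ⟨x, rfl⟩
  exact ((infinite_zpowers.2 hx).mono (Subgroup.zpowers_le.2 hmem)).to_subtype

lemma mealyMap_eq_self_of_forall_reachable {u : A}
    (hρ : ∀ v, Reachable δ u v → ρ v = id) (w : List S) : mealyMap δ ρ u w = w := by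
  induction w generalizing u with
  | nil => rfl
  | cons j w ih =>
    rw [mealyMap, hρ u ⟨[], rfl⟩, ih fun v ⟨s, hs⟩ => hρ v ⟨j :: s, hs⟩, id]

lemma mealyMap_cons_of_forall_reachable {x y : A} {i : S} (hy : δ i x = y)
    (hρ : ∀ v, Reachable δ y v → ρ v = id) (w : List S) :
    mealyMap δ ρ x (i :: w) = ρ x i :: w := by
  rw [mealyMap, hy, mealyMap_eq_self_of_forall_reachable δ hρ]

end Mealy

namespace MealyCycle

variable {A S : Type*} {δ : S → A → A} (C : MealyCycle δ)

def stateAt (t : ℕ) : A := C.states ⟨t % C.n, Nat.mod_lt _ C.npos⟩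

def labelAt (t : ℕ) : S := C.labels ⟨t % C.n, Nat.mod_lt _ C.npos⟩

/-- The labels read from `states (k + 1)` around the cycle back to `states k`. -/
def returnWord (k : Fin C.n) : List S := (List.range' (k + 1) (C.n - 1)).map C.labelAt

lemma stateAt_val (k : Fin C.n) : C.stateAt k = C.states k := by
  simp [stateAt, Nat.mod_eq_of_lt k.isLt]

lemma labelAt_val (k : Fin C.n) : C.labelAt k = C.labels k := by
  simp [labelAt, Nat.mod_eq_of_lt k.isLt]

lemma step_stateAt (t : ℕ) : δ (C.labelAt t) (C.stateAt t) = C.stateAt (t + 1) := by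
  simp [labelAt, stateAt, C.step, Nat.mod_add_mod]

lemma stateAt_add_n (t : ℕ) : C.stateAt (t + C.n) = C.stateAt t := by
  simp [stateAt]

lemma stateAt_add_ne {t j : ℕ} (hj : 0 < j) (hjn : j < C.n) :
    C.stateAt (t + j) ≠ C.stateAt t := by
  intro h
  have hmod : t + j ≡ t [MOD C.n] := Fin.val_eq_of_eq (C.inj h)
  have hdvd : C.n ∣ j := Nat.add_modEq_left_iff.1 hmod
  exact hj.ne' (Nat.eq_zero_of_dvd_of_lt hdvd hjn)

lemma mealyMap_range'_append {ρ : A → S → S} (t c : ℕ)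
    (hρ : ∀ j, t ≤ j → j < t + c → ρ (C.stateAt j) = id) (w : List S) :
    mealyMap δ ρ (C.stateAt t) ((List.range' t c).map C.labelAt ++ w) =
      (List.range' t c).map C.labelAt ++ mealyMap δ ρ (C.stateAt (t + c)) w := by
  induction c generalizing t with
  | zero => rfl
  | succ c ih =>
    rw [List.range'_succ, List.map_cons, List.cons_append, mealyMap, C.step_stateAt,
      hρ t le_rfl (by omega), ih (t + 1) (fun j hj hjc => hρ j (by omega) (by omega)),
      show t + 1 + c = t + (c + 1) by omega, id, List.cons_append]

lemma mealyMap_labels_returnWord_append {ρ : A → S → S} (k : Fin C.n)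
    (hρ : ∀ v ≠ C.states k, ρ v = id) (w : List S) :
    mealyMap δ ρ (C.states k) (C.labels k :: C.returnWord k ++ w) =
      ρ (C.states k) (C.labels k) :: C.returnWord k ++ mealyMap δ ρ (C.states k) w := by
  have hwrap : k + 1 + (C.n - 1) = k + C.n := by have := C.npos; omega
  rw [List.cons_append, mealyMap, ← C.stateAt_val, ← C.labelAt_val, C.step_stateAt, returnWord,
    C.mealyMap_range'_append, hwrap, C.stateAt_add_n, List.cons_append]
  intro j hj hjn
  refine hρ _ ?_
  rw [← C.stateAt_val, show j = k + (j - k) by omega]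
  exact C.stateAt_add_ne (by omega) (by omega)

end MealyCycle

theorem river_of_no_return_general
    {A S : Type*} (δ : S → A → A)
    (C : MealyCycle δ) (k : Fin C.n) (i : S) (y : A)
    (hy : δ i (C.states k) = y) (hyC : y ∉ Set.range C.states)
    (hnr : ∀ m : Fin C.n, ¬ Reachable δ y (C.states m)) :
    ∃ ρ : A → Equiv.Perm S, Infinite ↥(mealyGroup δ (fun a => ⇑(ρ a))) := by
  classical
  set x := C.states k
  set l := C.labels k
  have hil : i ≠ l := by
    rintro rfl
    exact hyC ⟨_, (C.step k).symm.trans hy⟩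
  let ρ : A → Equiv.Perm S := Pi.mulSingle x (Equiv.swap i l)
  have hρ_ne : ∀ v ≠ x, ⇑(ρ v) = id := fun v hv => by simp [ρ, Pi.mulSingle_eq_of_ne hv]
  have hρ_y : ∀ v, Reachable δ y v → ⇑(ρ v) = id :=
    fun v hv => hρ_ne v fun hvx => hnr k (by rwa [hvx] at hv)
  refine ⟨ρ, infinite_mealyGroup_of_not_isOfFinOrder δ (fun v => (ρ v).bijective) x ?_⟩
  refine IsOdometer.not_isOfFinOrder (L := l :: C.returnWord k) (B := i :: C.returnWord k)
    (fun w => ⟨?_, ?_⟩) (by simp) (by simpa using hil.symm)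
  · simpa [ρ, x, l] using C.mealyMap_labels_returnWord_append k hρ_ne w
  · simpa [ρ, x, l] using
      mealyMap_cons_of_forall_reachable δ hy hρ_y (C.returnWord k ++ w)

/-- River of no return Lemma: if a cycle `C` of a finite automaton has an
external exit `x —i→ y` (with `x` on `C` and `y` not on `C`) such that no state of `C`
is reachable from `y`, then the automaton can be enriched with invertible production
functions so that the generated group is infinite. -/
theorem river_of_no_return
    {A S : Type*} [Fintype A] [Fintype S]
    (hS : 1 < Fintype.card S) (δ : S → A → A)
    (C : MealyCycle δ) (k : Fin C.n) (i : S) (y : A)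
    (hy : δ i (C.states k) = y) (hyC : y ∉ Set.range C.states)
    (hnr : ∀ m : Fin C.n, ¬ Reachable δ y (C.states m)) :
    ∃ ρ : A → Equiv.Perm S, Infinite ↥(mealyGroup δ (fun a => ⇑(ρ a))) :=
  river_of_no_return_general δ C k i y hy hyC hnr
end

section
/- If a finite automaton (A, Σ, δ) contains a cycle with internal exit, then it also contains a (possibly shorter) cycle with external exit. -/
/-!
Let the internal exit be `x_k —i→ x_j` with `x_j ≠ x_{k+1}`. Following the cycle from `x_j` to
`x_k` and closing with that transition gives a cycle on the arc `x_j, …, x_k`, which misses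
`x_{k+1}`; the cycle transition `x_k → x_{k+1}` is then an external exit of the shorter cycle.
-/

namespace MealyCycle

variable {A S : Type*} {δ : S → A → A}

/-- The cycle `x 0 → x 1 → ⋯ → x m → x 0`, closed by the transition `x m —i→ x 0`. -/
def ofPath (m : ℕ) (x : ℕ → A) (l : ℕ → S) (i : S) (hx : Set.InjOn x (Set.Iic m))
    (hstep : ∀ t < m, δ (l t) (x t) = x (t + 1)) (hclose : δ i (x m) = x 0) :
    MealyCycle δ where
  n := m + 1
  npos := m.succ_pos
  states t := x t
  labels t := if (t : ℕ) = m then i else l t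
  inj s t hst := Fin.ext (hx (Set.mem_Iic.mpr s.is_le) (Set.mem_Iic.mpr t.is_le) hst)
  step t := by
    by_cases ht : (t : ℕ) = m
    · simp only [ht, if_true, Nat.mod_self, hclose]
    · have ht' : (t : ℕ) < m := lt_of_le_of_ne t.is_le ht
      simp only [if_neg ht, hstep t ht', Nat.mod_eq_of_lt (Nat.succ_lt_succ ht')]

theorem ofPath_hasExternalExit {m : ℕ} {x : ℕ → A} {l : ℕ → S} {i : S}
    (hx : Set.InjOn x (Set.Iic m)) (hstep : ∀ t < m, δ (l t) (x t) = x (t + 1))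
    (hclose : δ i (x m) = x 0) {t : ℕ} (ht : t ≤ m) {j : S}
    (hj : δ j (x t) ∉ x '' Set.Iic m) :
    HasExternalExit (ofPath m x l i hx hstep hclose) := by
  refine ⟨⟨t, Nat.lt_succ_of_le ht⟩, j, ?_⟩
  rintro ⟨s, hs⟩
  exact hj ⟨s, Set.mem_Iic.mpr s.is_le, hs⟩

variable (C : MealyCycle δ)

def stateSeq (t : ℕ) : A := C.states ⟨t % C.n, Nat.mod_lt _ C.npos⟩

def labelSeq (t : ℕ) : S := C.labels ⟨t % C.n, Nat.mod_lt _ C.npos⟩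

theorem stateSeq_val (k : Fin C.n) : C.stateSeq k = C.states k := by
  simp only [stateSeq, Nat.mod_eq_of_lt k.isLt]

theorem stateSeq_add_n (t : ℕ) : C.stateSeq (t + C.n) = C.stateSeq t := by
  simp only [stateSeq, Nat.add_mod_right]

theorem stateSeq_succ (t : ℕ) : C.stateSeq (t + 1) = δ (C.labelSeq t) (C.stateSeq t) := by
  simp only [stateSeq, labelSeq, C.step, Nat.mod_add_mod]

theorem stateSeq_eq_states_iff {t : ℕ} {k : Fin C.n} : C.stateSeq t = C.states k ↔ t % C.n = k :=
  C.inj.eq_iff.trans Fin.ext_iff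

theorem stateSeq_succ_of_eq_states {t : ℕ} {k : Fin C.n} (h : C.stateSeq t = C.states k) :
    C.stateSeq (t + 1) = δ (C.labels k) (C.states k) := by
  have hlabel : C.labelSeq t = C.labels k :=
    congrArg C.labels (Fin.ext (C.stateSeq_eq_states_iff.mp h))
  rw [stateSeq_succ, hlabel, h]

theorem stateSeq_injOn_window (a : ℕ) : Set.InjOn C.stateSeq (Set.Ico a (a + C.n)) := by
  intro s hs t ht hst
  have hmod : s ≡ t [MOD C.n] := C.stateSeq_eq_states_iff.mp hst
  simp only [Set.mem_Ico] at hs ht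
  exact hmod.eq_of_abs_lt (abs_sub_lt_iff.mpr ⟨by omega, by omega⟩)

theorem exists_lt_stateSeq_add_eq (a : ℕ) (k : Fin C.n) :
    ∃ d < C.n, C.stateSeq (a + d) = C.states k := by
  refine ⟨(k + C.n - a % C.n) % C.n, Nat.mod_lt _ C.npos, C.stateSeq_eq_states_iff.mpr ?_⟩
  have hsum : a % C.n + (k + C.n - a % C.n) = k + C.n := by
    have := Nat.mod_lt a C.npos
    omega
  rw [Nat.add_mod_mod, ← Nat.mod_add_mod, hsum, Nat.add_mod_right, Nat.mod_eq_of_lt k.isLt]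

theorem exists_hasExternalExit_of_shortcut {a m : ℕ} (hm : m + 1 < C.n) {i : S}
    (hi : δ i (C.stateSeq (a + m)) = C.stateSeq a) :
    ∃ D : MealyCycle δ, HasExternalExit D := by
  have hwindow : Set.MapsTo (a + ·) (Set.Iic (m + 1)) (Set.Ico a (a + C.n)) :=
    fun t ht => ⟨Nat.le_add_right a t, by rw [Set.mem_Iic] at ht; show a + t < a + C.n; omega⟩
  have hinj : Set.InjOn (fun t => C.stateSeq (a + t)) (Set.Iic (m + 1)) :=
    (C.stateSeq_injOn_window a).comp (add_right_injective a).injOn hwindow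
  have hstep : ∀ t < m, δ (C.labelSeq (a + t)) (C.stateSeq (a + t)) = C.stateSeq (a + (t + 1)) :=
    fun t _ => (C.stateSeq_succ (a + t)).symm
  refine ⟨ofPath m _ _ i (hinj.mono (Set.Iic_subset_Iic.mpr m.le_succ)) hstep hi,
    ofPath_hasExternalExit _ _ _ le_rfl (j := C.labelSeq (a + m)) ?_⟩
  rintro ⟨t, ht, hst⟩
  rw [← C.stateSeq_succ] at hst
  have := hinj (Set.Iic_subset_Iic.mpr m.le_succ ht) (le_refl (m + 1)) hst
  simp only [Set.mem_Iic] at ht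
  omega

end MealyCycle

theorem internal_exit_implies_external_exit_general
    {A S : Type*}
    (δ : S → A → A) (C : MealyCycle δ) (hC : HasInternalExit C) :
    ∃ D : MealyCycle δ, HasExternalExit D := by
  obtain ⟨k, i, ⟨j, hj⟩, hne⟩ := hC
  obtain ⟨m, hmn, hm⟩ := C.exists_lt_stateSeq_add_eq j k
  refine C.exists_hasExternalExit_of_shortcut (a := j) (m := m) ?_ (i := i) ?_
  · -- an arc of `n` states would end at `x_{j-1}`, whose cycle successor is `x_j`
    refine lt_of_le_of_ne hmn fun hmn' => hne ?_
    rw [← hj, ← C.stateSeq_val j, ← C.stateSeq_add_n, show (j : ℕ) + C.n = j + m + 1 by omega,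
      C.stateSeq_succ_of_eq_states hm]
  · rw [hm, C.stateSeq_val, hj]

/-- an automaton with a cycle with internal exit also has a
(possibly shorter) cycle with external exit. -/
theorem internal_exit_implies_external_exit
    {A S : Type*} [Fintype A] [Fintype S]
    (δ : S → A → A) (C : MealyCycle δ) (hC : HasInternalExit C) :
    ∃ D : MealyCycle δ, HasExternalExit D :=
  internal_exit_implies_external_exit_general δ C hC
end

section
/- A Mealy automaton generates a finite semigroup if and only if its dual automaton generates a finite semigroup. -/
/-!
For a word `s` over `Σ`, the dual action on `A*` satisfies
`δ_s (x u) = τ_s(x) · δ_{ρ_x(s)}(u)`, where `τ_s = wordTransition δ s` is the transition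
along `s`. Hence `δ_s` is determined by the family of maps `τ_{ρ_u(s)}`, `u ∈ A*`, where
`ρ_u = dualAct ρ δ u`. If the semigroup of the automaton is finite, `ρ_u` takes only finitely
many values, so this family ranges over a finite set and there are only finitely many `δ_s`.
-/

theorem Function.FactorsThrough.finite_range {α β γ : Type*} [Finite β] {f : α → β}
    {g : α → γ} (h : Function.FactorsThrough g f) : (Set.range g).Finite :=
  (Set.finite_range fun b : Set.range f => g b.2.choose).subset fun _ ⟨a, ha⟩ =>
    ⟨⟨f a, a, rfl⟩, (h (Set.mem_range_self a).choose_spec).trans ha⟩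

namespace Mealy

variable {A S : Type*} (δ : S → A → A) (ρ : A → S → S)

def wordTransition (s : List S) (x : A) : A := s.foldl (fun a i => δ i a) x

lemma dualAct_append (s t : List S) (u : List A) :
    dualAct δ ρ (s ++ t) u = dualAct δ ρ t (dualAct δ ρ s u) :=
  List.foldl_append ..

lemma dualAct_nil_right (s : List S) : dualAct δ ρ s [] = [] := by
  induction s with
  | nil => rfl
  | cons i s ih => exact ih

lemma dualAct_cons_right (s : List S) (x : A) (u : List A) :
    dualAct δ ρ s (x :: u) = wordTransition δ s x :: dualAct δ ρ (mealyMap δ ρ x s) u := by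
  induction s generalizing x u with
  | nil => rfl
  | cons i s ih => exact ih (δ i x) (mealyMap ρ δ (ρ x i) u)

lemma dualAct_eq_of_wordTransition_eq {s s' : List S}
    (h : ∀ u, wordTransition δ (dualAct ρ δ u s) = wordTransition δ (dualAct ρ δ u s')) :
    dualAct δ ρ s = dualAct δ ρ s' := by
  funext w
  induction w generalizing s s' with
  | nil => rw [dualAct_nil_right, dualAct_nil_right]
  | cons x w ih =>
    have hhead : wordTransition δ s = wordTransition δ s' := h []
    rw [dualAct_cons_right, dualAct_cons_right, hhead]
    exact congrArg _ (ih fun u => h (x :: u))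

lemma dualAct_mem_mealySemigroup {u : List A} (hu : u ≠ []) :
    (dualAct ρ δ u : Function.End (List S)) ∈ mealySemigroup δ ρ := by
  induction u with
  | nil => exact absurd rfl hu
  | cons x v ih =>
    have hx : (mealyMap δ ρ x : Function.End (List S)) ∈ mealySemigroup δ ρ :=
      Subsemigroup.subset_closure ⟨x, rfl⟩
    rcases eq_or_ne v [] with rfl | hv
    · exact hx
    · exact mul_mem (ih hv) hx

lemma finite_range_dualAct (h : Finite (mealySemigroup δ ρ)) :
    (Set.range (dualAct ρ δ)).Finite := by
  refine ((Set.finite_coe_iff.mp h).insert 1).subset ?_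
  rintro _ ⟨u, rfl⟩
  rcases eq_or_ne u [] with rfl | hu
  · exact Or.inl rfl
  · exact Or.inr (dualAct_mem_mealySemigroup δ ρ hu)

lemma mealySemigroup_subset_range_dualAct :
    (mealySemigroup ρ δ : Set (Function.End (List A))) ⊆ Set.range (dualAct δ ρ) := by
  let R : Subsemigroup (Function.End (List A)) :=
    { carrier := Set.range (dualAct δ ρ)
      mul_mem' := by
        rintro _ _ ⟨s, rfl⟩ ⟨t, rfl⟩
        exact ⟨t ++ s, funext (dualAct_append δ ρ t s)⟩ }
  show mealySemigroup ρ δ ≤ R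
  exact Subsemigroup.closure_le.mpr fun _ ⟨i, hi⟩ => ⟨[i], hi⟩

theorem finite_mealySemigroup_dual [Finite A] (h : Finite (mealySemigroup δ ρ)) :
    Finite (mealySemigroup ρ δ) := by
  have : Finite (Set.range (dualAct ρ δ)) := (finite_range_dualAct δ ρ h).to_subtype
  have hfactor : Function.FactorsThrough (dualAct δ ρ)
      fun s (q : Set.range (dualAct ρ δ)) => wordTransition δ (q.1 s) := fun s s' hss =>
    dualAct_eq_of_wordTransition_eq δ ρ fun u => congrFun hss ⟨_, u, rfl⟩
  exact Set.finite_coe_iff.mpr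
    (hfactor.finite_range.subset (mealySemigroup_subset_range_dualAct δ ρ))

end Mealy

theorem finite_semigroup_iff_dual_general
    {A S : Type*} [Fintype A] [Fintype S]
    (δ : S → A → A) (ρ : A → S → S) :
    Finite ↥(mealySemigroup δ ρ) ↔ Finite ↥(mealySemigroup ρ δ) :=
  ⟨Mealy.finite_mealySemigroup_dual δ ρ, Mealy.finite_mealySemigroup_dual ρ δ⟩

/-- F3: a Mealy automaton generates a finite semigroup iff its dual
automaton (obtained by exchanging the stateset and the alphabet) does. -/
theorem finite_semigroup_iff_dual
    {A S : Type*} [Fintype A] [Fintype S] [Nonempty A] [Nonempty S]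
    (δ : S → A → A) (ρ : A → S → S) :
    Finite ↥(mealySemigroup δ ρ) ↔ Finite ↥(mealySemigroup ρ δ) :=
  finite_semigroup_iff_dual_general δ ρ
end

section
/- Let M = (A, Σ, δ, ρ) be a Mealy automaton, let x be a state, let i, j ∈ Σ with i ≠ j, and suppose there is a cycle through x whose label from x is the word s = j t (with t ∈ Σ*), that δ_i(x) = y is not on this cycle, and that x is not reachable from y. If ρ_x is the transposition of i and j and ρ_z is the identity on Σ for every state z ≠ x, then for every n ≥ 1 the orbit of the word (j t)^n under the extended map ρ_x : Σ^* → Σ^* has size 2^n; consequently ρ_x is an element of infinite order in the group generated by M. -/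
/-!
Read a word made of `n` blocks `i t` / `j t` as an `n`-digit binary number, least significant
block first, with `j t` the digit `1`. On a block `j t` the state `x` outputs `i t` and, having
gone once round the cycle, is back at `x` for the next block: a carry. On a block `i t` it
outputs `j t` and moves to `y`, from which only states acting trivially are reachable: no carry.
So `ρ_x` adds `1` modulo `2 ^ n`, the word `(j t)^n` has period exactly `2 ^ n`, and these
periods are unbounded, so `ρ_x` has infinite order.
-/

open Function

theorem Function.ncard_range_iterate_of_mem_periodicPts {α : Type*} {f : α → α} {x : α}
    (hx : x ∈ periodicPts f) :
    (Set.range fun m : ℕ => f^[m] x).ncard = minimalPeriod f x := by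
  have hrange : (Set.range fun m : ℕ => f^[m] x) = (f^[·] x) '' Set.Iio (minimalPeriod f x) := by
    refine (Set.range_subset_iff.2 fun m => ?_).antisymm (Set.image_subset_range _ _)
    exact ⟨m % minimalPeriod f x, Nat.mod_lt _ (minimalPeriod_pos_of_mem_periodicPts hx),
      iterate_mod_minimalPeriod_eq⟩
  rw [hrange, iterate_injOn_Iio_minimalPeriod.ncard_image, ← Finset.coe_range,
    Set.ncard_coe_finset, Finset.card_range]

theorem Function.End.orderOf_eq_zero_of_minimalPeriod_unbounded {α : Type*} (f : Function.End α)
    (h : ∀ N : ℕ, ∃ a : α, N < minimalPeriod f a) : orderOf f = 0 := by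
  by_contra hf
  obtain ⟨a, ha⟩ := h (orderOf f)
  have hdvd : minimalPeriod f a ∣ orderOf f := MulAction.period_dvd_orderOf f a
  exact ha.not_ge (Nat.le_of_dvd (Nat.pos_of_ne_zero hf) hdvd)

section BinaryWord

variable {S : Type*} (a b : S) (t : List S)

/-- The `n`-digit binary expansion of `k mod 2 ^ n`, least significant digit first, with the
digit `0` written as the block `a :: t` and the digit `1` as `b :: t`. -/
def binaryWord : ℕ → ℕ → List S
  | 0, _ => []
  | n + 1, k => (if k % 2 = 0 then a else b) :: t ++ binaryWord n (k / 2)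

theorem binaryWord_two_pow_sub_one (n : ℕ) :
    binaryWord a b t n (2 ^ n - 1) = (List.replicate n (b :: t)).flatten := by
  induction n with
  | zero => rfl
  | succ n ih =>
    have hpos : 1 ≤ 2 ^ n := Nat.one_le_two_pow
    have hhalf : (2 ^ (n + 1) - 1) / 2 = 2 ^ n - 1 := by rw [pow_succ]; omega
    simp [binaryWord, hhalf, ih, List.replicate_succ]

theorem binaryWord_eq_binaryWord_iff {a b : S} (hab : a ≠ b) (n k k' : ℕ) :
    binaryWord a b t n k = binaryWord a b t n k' ↔ k ≡ k' [MOD 2 ^ n] := by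
  induction n generalizing k k' with
  | zero => simp [binaryWord, Nat.modEq_one]
  | succ n ih =>
    have hdigit : ((if k % 2 = 0 then a else b) = if k' % 2 = 0 then a else b) ↔
        k % 2 = k' % 2 := by
      split_ifs <;> simp [hab, hab.symm] <;> omega
    simp only [binaryWord, List.cons_append, List.cons.injEq, List.append_cancel_left_eq,
      hdigit, ih, Nat.ModEq, pow_succ', Nat.mod_mul]
    omega

theorem binaryWord_succ {F : List S → List S} (hnil : F [] = [])
    (hcarry : ∀ w, F (b :: (t ++ w)) = a :: (t ++ F w))
    (hstop : ∀ w, F (a :: (t ++ w)) = b :: (t ++ w)) (n k : ℕ) :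
    F (binaryWord a b t n k) = binaryWord a b t n (k + 1) := by
  induction n generalizing k with
  | zero => exact hnil
  | succ n ih =>
    rcases Nat.mod_two_eq_zero_or_one k with hk | hk
    · have hk' : (k + 1) / 2 = k / 2 := by omega
      simp [binaryWord, hk, hk', hstop, Nat.succ_mod_two_eq_one_iff.2 hk]
    · have hk' : (k + 1) / 2 = k / 2 + 1 := by omega
      simp [binaryWord, hk, hk', hcarry, ih, Nat.succ_mod_two_eq_zero_iff.2 hk]

theorem minimalPeriod_binaryWord {a b : S} (hab : a ≠ b) {F : List S → List S}
    (hnil : F [] = []) (hcarry : ∀ w, F (b :: (t ++ w)) = a :: (t ++ F w))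
    (hstop : ∀ w, F (a :: (t ++ w)) = b :: (t ++ w)) (n k : ℕ) :
    minimalPeriod F (binaryWord a b t n k) = 2 ^ n := by
  have hsemiconj : Semiconj (binaryWord a b t n) Nat.succ F := fun k =>
    (binaryWord_succ a b t hnil hcarry hstop n k).symm
  have hperiodic : ∀ m, IsPeriodicPt F m (binaryWord a b t n k) ↔ 2 ^ n ∣ m := fun m => by
    rw [IsPeriodicPt, IsFixedPt, ← hsemiconj.iterate_right, Nat.succ_iterate,
      binaryWord_eq_binaryWord_iff t hab, Nat.add_modEq_left_iff]
  refine Nat.dvd_antisymm ?_ ?_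
  · exact isPeriodicPt_iff_minimalPeriod_dvd.1 ((hperiodic _).2 dvd_rfl)
  · exact (hperiodic _).1 (isPeriodicPt_minimalPeriod F _)

end BinaryWord

section Mealy

variable {A S : Type*} {δ : S → A → A} {ρ : A → S → S}

theorem mealyMap_eq_self_of_not_reachable {x : A} (hρ : ∀ z, z ≠ x → ρ z = id) (u : List S) :
    ∀ {z : A}, ¬ Reachable δ z x → mealyMap δ ρ z u = u := by
  induction u with
  | nil => exact fun _ => rfl
  | cons a u ih =>
    intro z hz
    have hzx : z ≠ x := by rintro rfl; exact hz ⟨[], rfl⟩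
    have hnext : ¬ Reachable δ (δ a z) x := fun ⟨s, hs⟩ => hz ⟨a :: s, hs⟩
    rw [mealyMap, hρ z hzx, ih hnext, id]

theorem mealyMap_cycle_drop (C : MealyCycle δ) (hρ : ∀ z, z ≠ C.states ⟨0, C.npos⟩ → ρ z = id)
    {k : ℕ} (hk : 1 ≤ k) (hkn : k ≤ C.n) (w : List S) :
    mealyMap δ ρ (C.states ⟨k % C.n, Nat.mod_lt _ C.npos⟩) ((List.ofFn C.labels).drop k ++ w) =
      (List.ofFn C.labels).drop k ++ mealyMap δ ρ (C.states ⟨0, C.npos⟩) w := by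
  induction hd : C.n - k generalizing k with
  | zero =>
    obtain rfl : k = C.n := by omega
    rw [List.drop_eq_nil_of_le (by simp)]
    simp [Nat.mod_self]
  | succ d ih =>
    have hkn' : k < C.n := by omega
    have hne : C.states ⟨k, hkn'⟩ ≠ C.states ⟨0, C.npos⟩ :=
      C.inj.ne (by simp only [ne_eq, Fin.mk.injEq]; omega)
    have hmod : (⟨k % C.n, Nat.mod_lt _ C.npos⟩ : Fin C.n) = ⟨k, hkn'⟩ :=
      Fin.ext (Nat.mod_eq_of_lt hkn')
    rw [List.drop_eq_getElem_cons (by simpa using hkn'), List.cons_append, hmod, mealyMap,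
      hρ _ hne, List.getElem_ofFn, C.step ⟨k, hkn'⟩, id]
    exact congrArg _ (ih (k := k + 1) (by omega) (by omega) (by omega))

theorem mealyMap_cycle_start (C : MealyCycle δ) (hρ : ∀ z, z ≠ C.states ⟨0, C.npos⟩ → ρ z = id)
    {j : S} {t : List S} (hlabel : List.ofFn C.labels = j :: t) (w : List S) :
    mealyMap δ ρ (C.states ⟨0, C.npos⟩) (j :: (t ++ w)) =
      ρ (C.states ⟨0, C.npos⟩) j :: (t ++ mealyMap δ ρ (C.states ⟨0, C.npos⟩) w) := by
  have hj : C.labels ⟨0, C.npos⟩ = j := by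
    rw [← List.getElem_ofFn (f := C.labels) (h := by simpa using C.npos)]
    simp only [hlabel, List.getElem_cons_zero]
  have ht : (List.ofFn C.labels).drop 1 = t := by rw [hlabel, List.drop_one, List.tail_cons]
  have hstep := C.step ⟨0, C.npos⟩
  rw [hj] at hstep
  rw [mealyMap, hstep, ← ht]
  exact congrArg _ (mealyMap_cycle_drop C hρ le_rfl C.npos w)

end Mealy

theorem adding_machine_mimic_general
    {A S : Type*} [DecidableEq S]
    (δ : S → A → A) (ρ : A → S → S)
    (x : A) (i j : S) (hij : i ≠ j)
    (C : MealyCycle δ) (hx : C.states ⟨0, C.npos⟩ = x)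
    (t : List S) (hlabel : List.ofFn C.labels = j :: t)
    (y : A) (hy : δ i x = y)
    (hnr : ¬ Reachable δ y x)
    (hρx : ρ x = ⇑(Equiv.swap i j)) (hρz : ∀ z : A, z ≠ x → ρ z = id) :
    (∀ n : ℕ, 1 ≤ n → Set.ncard
        (Set.range fun m : ℕ =>
          (mealyMap δ ρ x)^[m] ((List.replicate n (j :: t)).flatten)) = 2 ^ n)
    ∧ orderOf (G := Function.End (List S)) (mealyMap δ ρ x) = 0 := by
  subst hx hy
  set F := mealyMap δ ρ (C.states ⟨0, C.npos⟩) with hF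
  have hcarry : ∀ w, F (j :: (t ++ w)) = i :: (t ++ F w) := fun w => by
    rw [hF, mealyMap_cycle_start C hρz hlabel, hρx, Equiv.swap_apply_right]
  have hstop : ∀ w, F (i :: (t ++ w)) = j :: (t ++ w) := fun w => by
    rw [hF, mealyMap, hρx, Equiv.swap_apply_left, mealyMap_eq_self_of_not_reachable hρz _ hnr]
  have hperiod : ∀ n, minimalPeriod F (List.replicate n (j :: t)).flatten = 2 ^ n := fun n => by
    rw [← binaryWord_two_pow_sub_one i j t]
    exact minimalPeriod_binaryWord t hij rfl hcarry hstop n _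
  refine ⟨fun n _ => ?_, ?_⟩
  · have hperiodic := minimalPeriod_pos_iff_mem_periodicPts.1 ((hperiod n).symm ▸ Nat.two_pow_pos n)
    rw [ncard_range_iterate_of_mem_periodicPts hperiodic, hperiod]
  · exact Function.End.orderOf_eq_zero_of_minimalPeriod_unbounded F fun N =>
      ⟨_, (hperiod N).symm ▸ Nat.lt_two_pow_self⟩

/-- proof of the River of no return Lemma: suppose a cycle through `x`
has label `j t` from `x`, the exit `δ_i(x) = y` (`i ≠ j`) leaves the cycle, and `x` is not
reachable from `y`.  If `ρ_x` is the transposition of `i` and `j` and every other `ρ_z` is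
the identity, then the orbit of `(j t)^n` under `ρ_x` has size `2^n` for every `n ≥ 1`;
consequently `ρ_x` has infinite order in the generated group. -/
theorem adding_machine_mimic
    {A S : Type*} [Fintype A] [Fintype S] [DecidableEq S]
    (δ : S → A → A) (ρ : A → S → S)
    (x : A) (i j : S) (hij : i ≠ j)
    (C : MealyCycle δ) (hx : C.states ⟨0, C.npos⟩ = x)
    (t : List S) (hlabel : List.ofFn C.labels = j :: t)
    (y : A) (hy : δ i x = y) (hyC : y ∉ Set.range C.states)
    (hnr : ¬ Reachable δ y x)
    (hρx : ρ x = ⇑(Equiv.swap i j)) (hρz : ∀ z : A, z ≠ x → ρ z = id) :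
    (∀ n : ℕ, 1 ≤ n → Set.ncard
        (Set.range fun m : ℕ =>
          (mealyMap δ ρ x)^[m] ((List.replicate n (j :: t)).flatten)) = 2 ^ n)
    ∧ orderOf (G := Function.End (List S)) (mealyMap δ ρ x) = 0 :=
  adding_machine_mimic_general δ ρ x i j hij C hx t hlabel y hy hnr hρx hρz
end
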